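/- For every real μ, nonnegative integer n, and real x: Σ_{j=0}^n C(n,j) (-1)^j 4^j (μ)_j H_{2(n-j)}(x) = H^μ_{2n}(x), where H_k denotes the ordinary Hermite polynomial and H^μ_k the generalized Hermite polynomial. -/

import Mathlib

open Finset

/-- Rising factorial (Pochhammer symbol) on ℝ. -/
noncomputable def asc (a : ℝ) (k : ℕ) : ℝ := ∏ i ∈ Finset.range k, (a + i)

/-- Generalized Laguerre polynomial `L_n^α(x)`. -/
noncomputable def lag (n : ℕ) (α : ℝ) (x : ℝ) : ℝ :=
  ∑ j ∈ Finset.range (n + 1),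
    ((-1 : ℝ) ^ j / (j.factorial * (n - j).factorial)) * asc (α + j + 1) (n - j) * x ^ j

/-- Generalized Hermite polynomial of even degree: `H^μ_{2n}`. -/
noncomputable def Heven (μ : ℝ) (n : ℕ) (x : ℝ) : ℝ :=
  (-1 : ℝ) ^ n * 2 ^ (2 * n) * n.factorial * lag n (μ - 1/2) (x ^ 2)

/-- Generalized Hermite polynomial of odd degree: `H^μ_{2n+1}`. -/
noncomputable def Hodd (μ : ℝ) (n : ℕ) (x : ℝ) : ℝ :=
  (-1 : ℝ) ^ n * 2 ^ (2 * n + 1) * n.factorial * x * lag n (μ + 1/2) (x ^ 2)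

/-- Generalized Hermite polynomial `H^μ_n`. -/
noncomputable def GH (μ : ℝ) (n : ℕ) (x : ℝ) : ℝ :=
  if n % 2 = 0 then Heven μ (n / 2) x else Hodd μ (n / 2) x

/-- Physicists' Hermite polynomials. -/
noncomputable def hermite : ℕ → ℝ → ℝ
  | 0, _ => 1
  | 1, x => 2 * x
  | (n + 2), x => 2 * x * hermite (n + 1) x - 2 * (n + 1) * hermite n x


lemma asc_zero (a : ℝ) : asc a 0 = 1 := by simp [asc]

lemma asc_succ (a : ℝ) (k : ℕ) : asc a (k + 1) = asc a k * (a + k) := by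
  simp [asc, Finset.prod_range_succ]

lemma asc_succ' (a : ℝ) (k : ℕ) : asc a (k + 1) = a * asc (a + 1) k := by
  simp only [asc, Finset.prod_range_succ']
  rw [mul_comm]
  congr 1
  · norm_num
  · exact Finset.prod_congr rfl (by intros; push_cast; ring)

lemma vandermonde (a b : ℝ) (k : ℕ) :
    ∑ j ∈ range (k + 1), (k.choose j : ℝ) * asc a j * asc b (k - j) = asc (a + b) k := by
  induction k with
  | zero => simp [asc_zero]
  | succ k ih =>
    rw [Finset.sum_range_succ', asc_succ]
    simp only [Nat.choose_succ_succ, Nat.cast_add, Nat.succ_sub_succ]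
    rw [Finset.sum_congr rfl (fun j hj =>
      (by ring :
      ((k.choose j : ℝ) + k.choose (j+1)) * asc a (j+1) * asc b (k - j)
        = (k.choose j : ℝ) * asc a (j+1) * asc b (k - j)
          + (k.choose (j+1) : ℝ) * asc a (j+1) * asc b (k - j)))]
    rw [Finset.sum_add_distrib]
    have h2 : ∑ j ∈ range (k+1), (k.choose (j+1) : ℝ) * asc a (j+1) * asc b (k - j)
        + ((k+1).choose 0 : ℝ) * asc a 0 * asc b (k + 1 - 0)
        = ∑ j ∈ range (k+1), (k.choose j : ℝ) * asc a j * asc b (k + 1 - j) := by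
      rw [Finset.sum_range_succ' (fun j => (k.choose j : ℝ) * asc a j * asc b (k + 1 - j)) k]
      simp only [Nat.succ_sub_succ]
      rw [Finset.sum_range_succ]
      simp [Nat.choose_succ_self]
    rw [add_assoc, h2, ← Finset.sum_add_distrib]
    have key : ∀ j ∈ range (k+1),
        (k.choose j : ℝ) * asc a (j+1) * asc b (k - j)
          + (k.choose j : ℝ) * asc a j * asc b (k + 1 - j)
        = ((k.choose j : ℝ) * asc a j * asc b (k - j)) * (a + b + k) := by
      intro j hj
      have hjk : j ≤ k := by simpa [Nat.lt_succ_iff] using hj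
      have h1 : k + 1 - j = (k - j) + 1 := by omega
      rw [h1, asc_succ, asc_succ, Nat.cast_sub hjk]
      ring
    rw [Finset.sum_congr rfl key, ← Finset.sum_mul, ih]

lemma vandermonde' (a b : ℝ) (k : ℕ) :
    ∑ j ∈ range (k + 1), asc a j / j.factorial * (asc b (k - j) / (k - j).factorial)
      = asc (a + b) k / k.factorial := by
  rw [← vandermonde a b k, Finset.sum_div]
  refine Finset.sum_congr rfl fun j hj => ?_
  have hjk : j ≤ k := by simpa [Nat.lt_succ_iff] using hj
  rw [Nat.cast_choose ℝ hjk]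
  have h1 : (j.factorial : ℝ) ≠ 0 := Nat.cast_ne_zero.2 j.factorial_ne_zero
  have h2 : ((k - j).factorial : ℝ) ≠ 0 := Nat.cast_ne_zero.2 (k - j).factorial_ne_zero
  have h3 : (k.factorial : ℝ) ≠ 0 := Nat.cast_ne_zero.2 k.factorial_ne_zero
  field_simp

lemma tri (n : ℕ) (f : ℕ → ℕ → ℝ) :
    ∑ j ∈ range (n + 1), ∑ i ∈ range (n + 1 - j), f j i
      = ∑ i ∈ range (n + 1), ∑ j ∈ range (n + 1 - i), f j i := by
  have h : ∀ g : ℕ → ℕ → ℝ, ∑ j ∈ range (n + 1), ∑ i ∈ range (n + 1 - j), g j i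
      = ∑ j ∈ range (n + 1), ∑ i ∈ range (n + 1), if j + i ≤ n then g j i else 0 := by
    intro g
    refine Finset.sum_congr rfl fun j hj => ?_
    have hjn : j ≤ n := by simpa [Nat.lt_succ_iff] using hj
    rw [← Finset.sum_subset (Finset.range_subset_range.2 (by omega : n + 1 - j ≤ n + 1))
      (fun i hi hni => by
        rw [if_neg]
        simp only [Finset.mem_range] at hni
        omega)]
    refine Finset.sum_congr rfl fun i hi => ?_
    rw [if_pos]
    simp only [Finset.mem_range] at hi
    omega
  rw [h, h (fun j i => f i j), Finset.sum_comm]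
  refine Finset.sum_congr rfl fun j _ => Finset.sum_congr rfl fun i _ => ?_
  simp [Nat.add_comm]

lemma lag_zero (α x : ℝ) : lag 0 α x = 1 := by
  simp [lag, asc_zero]

/-- connection formula -/
lemma lag_conn (n : ℕ) (β μ y : ℝ) :
    ∑ j ∈ range (n + 1), asc μ j / j.factorial * lag (n - j) β y = lag n (β + μ) y := by
  simp only [lag, Finset.mul_sum]
  have hswap := tri n (fun j i =>
    asc μ j / j.factorial *
      ((-1 : ℝ) ^ i / (i.factorial * (n - j - i).factorial) * asc (β + i + 1) (n - j - i) * y ^ i))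
  rw [Finset.sum_congr rfl (fun j hj => ?_), hswap]
  · refine Finset.sum_congr rfl fun i hi => ?_
    have hin : i ≤ n := by simpa [Nat.lt_succ_iff] using hi
    have h1 : n + 1 - i = (n - i) + 1 := by omega
    rw [h1]
    have hstep : ∀ j ∈ range (n - i + 1),
        asc μ j / j.factorial *
          ((-1 : ℝ) ^ i / (i.factorial * (n - j - i).factorial) * asc (β + i + 1) (n - j - i) * y ^ i)
        = (asc μ j / j.factorial * (asc (β + i + 1) (n - i - j) / (n - i - j).factorial))
            * ((-1 : ℝ) ^ i / i.factorial * y ^ i) := by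
      intro j hj
      have h2 : n - j - i = n - i - j := by omega
      rw [h2]
      ring
    rw [Finset.sum_congr rfl hstep, ← Finset.sum_mul, vandermonde' μ (β + i + 1) (n - i)]
    have h3 : μ + (β + i + 1) = β + μ + i + 1 := by ring
    rw [h3]
    ring
  · have hjn : j ≤ n := by simpa [Nat.lt_succ_iff] using hj
    have h4 : n - j + 1 = n + 1 - j := by omega
    rw [h4]

/-- `L_{n+1}^{α+1} = L_{n+1}^α + L_n^{α+1}` -/
lemma lagI2 (n : ℕ) (α y : ℝ) :
    lag (n + 1) (α + 1) y = lag (n + 1) α y + lag n (α + 1) y := by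
  simp only [lag]
  rw [Finset.sum_range_succ, Finset.sum_range_succ
    (fun j => ((-1 : ℝ) ^ j / (j.factorial * (n + 1 - j).factorial)) * asc (α + j + 1) (n + 1 - j) * y ^ j) (n+1)]
  simp only [Nat.sub_self, asc_zero, mul_one]
  rw [add_right_comm]
  congr 1
  rw [← Finset.sum_add_distrib]
  refine Finset.sum_congr rfl fun j hj => ?_
  have hjn : j ≤ n := by simpa [Nat.lt_succ_iff] using hj
  have hk : n + 1 - j = (n - j) + 1 := by omega
  have e1 : asc (α + 1 + j + 1) (n + 1 - j)
      = asc (α + 1 + j + 1) (n - j) * (α + 1 + j + 1 + (n - j : ℕ)) := by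
    rw [hk, asc_succ]
  have e2 : asc (α + j + 1) (n + 1 - j) = (α + j + 1) * asc (α + 1 + j + 1) (n - j) := by
    rw [hk, asc_succ']
    ring_nf
  rw [e1, e2, hk]
  have h1 : (j.factorial : ℝ) ≠ 0 := Nat.cast_ne_zero.2 j.factorial_ne_zero
  have h2 : (((n - j)).factorial : ℝ) ≠ 0 := Nat.cast_ne_zero.2 (n - j).factorial_ne_zero
  have h3 : ((n - j : ℕ) : ℝ) = (n : ℝ) - j := Nat.cast_sub hjn
  have hle : (j : ℝ) ≤ n := Nat.cast_le.mpr hjn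
  have h5 : (n : ℝ) - j + 1 ≠ 0 := by linarith
  rw [Nat.factorial_succ]
  push_cast [h3]
  field_simp
  ring

/-- `(n+1) L_{n+1}^α = (n+α+1) L_n^α - y L_n^{α+1}` -/
lemma lagI1 (n : ℕ) (α y : ℝ) :
    (n + 1 : ℝ) * lag (n + 1) α y = (n + α + 1) * lag n α y - y * lag n (α + 1) y := by
  have hA : ∑ j ∈ range (n + 2),
      ((n + 1 - j : ℕ) : ℝ) * ((-1 : ℝ) ^ j / (j.factorial * (n + 1 - j).factorial)) * asc (α + j + 1) (n + 1 - j) * y ^ j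
      = (n + α + 1) * lag n α y := by
    rw [Finset.sum_range_succ]
    simp only [Nat.sub_self, Nat.cast_zero, zero_mul]
    rw [add_zero, lag, Finset.mul_sum]
    refine Finset.sum_congr rfl fun j hj => ?_
    have hjn : j ≤ n := by simpa [Nat.lt_succ_iff] using hj
    have hk : n + 1 - j = (n - j) + 1 := by omega
    rw [hk, asc_succ, Nat.factorial_succ]
    have h1 : (j.factorial : ℝ) ≠ 0 := Nat.cast_ne_zero.2 j.factorial_ne_zero
    have h2 : (((n - j)).factorial : ℝ) ≠ 0 := Nat.cast_ne_zero.2 (n - j).factorial_ne_zero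
    have h3 : ((n - j : ℕ) : ℝ) = (n : ℝ) - j := Nat.cast_sub hjn
    have hle : (j : ℝ) ≤ n := Nat.cast_le.mpr hjn
    have h5 : (n : ℝ) - j + 1 ≠ 0 := by linarith
    push_cast [h3]
    field_simp
    ring
  have hB : ∑ j ∈ range (n + 2),
      (j : ℝ) * ((-1 : ℝ) ^ j / (j.factorial * (n + 1 - j).factorial)) * asc (α + j + 1) (n + 1 - j) * y ^ j
      = -(y * lag n (α + 1) y) := by
    rw [Finset.sum_range_succ']
    simp only [Nat.cast_zero, zero_mul]
    rw [add_zero, lag, Finset.mul_sum, ← Finset.sum_neg_distrib]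
    refine Finset.sum_congr rfl fun j hj => ?_
    have hjn : j ≤ n := by simpa [Nat.lt_succ_iff] using hj
    have hk : n + 1 - (j + 1) = n - j := by omega
    have harg : α + (j + 1 : ℕ) + 1 = α + 1 + j + 1 := by push_cast; ring
    rw [hk, harg, Nat.factorial_succ]
    have h1 : (j.factorial : ℝ) ≠ 0 := Nat.cast_ne_zero.2 j.factorial_ne_zero
    have h2 : (((n - j)).factorial : ℝ) ≠ 0 := Nat.cast_ne_zero.2 (n - j).factorial_ne_zero
    push_cast
    field_simp
    ring
  rw [← hA, sub_eq_add_neg, ← hB, lag, Finset.mul_sum, ← Finset.sum_add_distrib]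
  refine Finset.sum_congr rfl fun j hj => ?_
  have hjn : j ≤ n + 1 := by simpa [Nat.lt_succ_iff] using hj
  have h3 : ((n + 1 - j : ℕ) : ℝ) = (n : ℝ) + 1 - j := by
    rw [Nat.cast_sub hjn]; push_cast; ring
  rw [h3]
  ring

lemma hermite_lag : ∀ k : ℕ,
    (∀ x : ℝ, hermite (2 * k) x = (-1)^k * 4^k * k.factorial * lag k (-1/2) (x^2))
    ∧ (∀ x : ℝ, hermite (2 * k + 1) x
        = (-1)^k * 4^k * 2 * k.factorial * x * lag k (1/2) (x^2)) := by
  intro k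
  induction k with
  | zero =>
    constructor <;> intro x <;> simp [hermite, lag_zero]
  | succ k ih =>
    obtain ⟨he, ho⟩ := ih
    have he' : ∀ x : ℝ, hermite (2 * (k + 1)) x
        = (-1)^(k+1) * 4^(k+1) * (k+1).factorial * lag (k+1) (-1/2) (x^2) := by
      intro x
      have hrec : hermite (2 * k + 2) x
          = 2 * x * hermite (2 * k + 1) x - 2 * (2 * k + 1 : ℕ) * hermite (2 * k) x := by
        show hermite ((2 * k) + 2) x = _
        rw [hermite]
        norm_num
      have h2 : 2 * (k + 1) = 2 * k + 2 := by ring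
      rw [h2, hrec, he, ho]
      have hI := lagI1 k (-1/2) (x^2)
      rw [show (-1/2 : ℝ) + 1 = 1/2 by norm_num] at hI
      push_cast [Nat.factorial_succ]
      linear_combination ((-1 : ℝ)^k * 4^(k+1) * (k.factorial : ℝ)) * hI
    refine ⟨he', fun x => ?_⟩
    have hrec : hermite (2 * (k + 1) + 1) x
        = 2 * x * hermite (2 * (k + 1)) x - 2 * (2 * k + 2 : ℕ) * hermite (2 * k + 1) x := by
      show hermite ((2 * k + 1) + 2) x = _
      rw [hermite]
      norm_num
      ring_nf
    rw [hrec, he', ho]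
    have hI := lagI2 k (-1/2) (x^2)
    rw [show (-1/2 : ℝ) + 1 = 1/2 by norm_num] at hI
    push_cast [Nat.factorial_succ]
    linear_combination ((-1 : ℝ)^k * 4^(k+1) * 2 * ((k.factorial : ℝ) * (k + 1)) * x) * hI


theorem stmt15 (μ : ℝ) (n : ℕ) (x : ℝ) :
    ∑ j ∈ Finset.range (n + 1),
        (n.choose j : ℝ) * (-1 : ℝ) ^ j * 4 ^ j * asc μ j * hermite (2 * (n - j)) x =
      Heven μ n x := by
  rw [Heven, show ((2:ℝ)) ^ (2*n) = 4 ^ n by rw [pow_mul]; norm_num,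
    show μ - 1/2 = (-1/2 : ℝ) + μ by ring, ← lag_conn n (-1/2) μ (x^2), Finset.mul_sum]
  refine Finset.sum_congr rfl fun j hj => ?_
  have hjn : j ≤ n := by simpa [Nat.lt_succ_iff] using hj
  have h1 : (-1 : ℝ)^n = (-1)^j * (-1)^(n-j) := by rw [← pow_add, Nat.add_sub_cancel' hjn]
  have h2 : (4 : ℝ)^n = 4^j * 4^(n-j) := by rw [← pow_add, Nat.add_sub_cancel' hjn]
  have h3 : ((n - j).factorial : ℝ) ≠ 0 := Nat.cast_ne_zero.2 (n - j).factorial_ne_zero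
  have h4 : (j.factorial : ℝ) ≠ 0 := Nat.cast_ne_zero.2 j.factorial_ne_zero
  have hs : (n.choose j : ℝ) * (-1)^j * 4^j * ((-1 : ℝ)^(n-j) * 4^(n-j) * ((n-j).factorial : ℝ))
      = (-1 : ℝ)^n * 4^n * (n.factorial : ℝ) / (j.factorial : ℝ) := by
    rw [Nat.cast_choose ℝ hjn, h1, h2]
    field_simp
  rw [(hermite_lag (n - j)).1 x]
  linear_combination (asc μ j * lag (n - j) (-1/2) (x^2)) * hs
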